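/- arXiv:math/0602532 — 2 statements merged into one kernel-verified Lean document; each statement's English description precedes it below -/
import Mathlib

section
/- Let (Ω, F, P) be a probability space and (f_n)_{n≥1} a sequence of measurable functions f_n : Ω → [0, ∞). Then there exist functions g_n, where each g_n is a finite convex combination of the functions {f_m : m ≥ n}, and a measurable function g : Ω → [0, +∞], such that g_n converges to g P-almost surely as n → ∞. -/
/-!
Minimise `J h = ∫ exp (-2 h)` over the forward convex hulls `K n = conv {f m | m ≥ n}`. The
infima `inf_{K n} J` increase to a finite limit, so near-minimisers `G n ∈ K n` have a small
midpoint defect `J (G n) + J (G m) - 2 J ((G n + G m) / 2)`; this defect is exactly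
`‖exp (-G n) - exp (-G m)‖₂²`. Passing to a subsequence (which stays forward because `K` is
decreasing) makes these `L²` distances summable, so `exp (-G n)` converges almost surely, and
hence so does `G n` in `[0, ∞]`, as `exp (-·)` is a homeomorphism `[0, ∞] ≃ [0, 1]`.
-/

open MeasureTheory Filter Topology Set
open scoped ENNReal

section ConvexCombination

variable {R E ι : Type*} [Field R] [LinearOrder R] [IsStrictOrderedRing R]
  [AddCommGroup E] [Module R E]

theorem exists_fin_of_mem_convexHull_image {f : ι → E} {s : Set ι} {x : E}
    (hx : x ∈ convexHull R (f '' s)) :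
    ∃ (k : ℕ) (m : Fin (k + 1) → ι) (w : Fin (k + 1) → R),
      (∀ i, m i ∈ s) ∧ (∀ i, 0 ≤ w i) ∧ ∑ i, w i = 1 ∧ x = ∑ i, w i • f (m i) := by
  obtain ⟨κ, _, w, z, hw₀, hw₁, hz, rfl⟩ := mem_convexHull_iff_exists_fintype.mp hx
  choose m hm hfm using hz
  obtain ⟨k, hk⟩ : ∃ k, Fintype.card κ = k + 1 := by
    refine Nat.exists_eq_add_one.mpr (Fintype.card_pos_iff.mpr ?_)
    by_contra hempty
    simp [not_nonempty_iff.mp hempty] at hw₁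
  let e := (Fintype.equivFin κ).trans (finCongr hk)
  refine ⟨k, m ∘ e.symm, w ∘ e.symm, fun i => hm _, fun i => hw₀ _, ?_, ?_⟩
  · simpa [← hw₁] using e.symm.sum_comp w
  · simp_rw [Function.comp_apply, hfm]
    exact (e.symm.sum_comp fun j => w j • z j).symm

end ConvexCombination

theorem measurable_of_mem_convexHull {Ω : Type*} [MeasurableSpace Ω] {s : Set (Ω → ℝ)}
    (hs : ∀ g ∈ s, Measurable g) {h : Ω → ℝ} (hh : h ∈ convexHull ℝ s) : Measurable h := by
  have hconv : Convex ℝ {g : Ω → ℝ | Measurable g} := fun _ hx _ hy a b _ _ _ =>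
    (Measurable.const_smul hx a).add (Measurable.const_smul hy b)
  exact convexHull_min hs hconv hh

section MidpointDefect

variable {E : Type*} [AddCommGroup E] [Module ℝ E]

noncomputable def midpointDefect (J : E → ℝ) (x y : E) : ℝ :=
  J x + J y - 2 * J (midpoint ℝ x y)

variable {K : ℕ → Set E} (hK : Antitone K) (hconv : ∀ n, Convex ℝ (K n))
  (hne : ∀ n, (K n).Nonempty) {J : E → ℝ} (hbelow : BddBelow (J '' K 0))
  (habove : BddAbove (J '' K 0))
include hK hconv hne hbelow habove

theorem exists_seq_mem_eventually_midpointDefect_lt :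
    ∃ G : ℕ → E, (∀ n, G n ∈ K n) ∧
      ∀ δ > 0, ∀ᶠ N in atTop, ∀ n ≥ N, ∀ m ≥ N, midpointDefect J (G n) (G m) < δ := by
  set t : ℕ → ℝ := fun n => sInf (J '' K n)
  have hbdd n : BddBelow (J '' K n) := hbelow.mono (image_mono (hK (Nat.zero_le n)))
  have ht_le {n x} (hx : x ∈ K n) : t n ≤ J x := csInf_le (hbdd n) (mem_image_of_mem J hx)
  have ht_mono : Monotone t := fun n m hnm =>
    csInf_le_csInf (hbdd n) ((hne m).image J) (image_mono (hK hnm))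
  obtain ⟨b, hb⟩ := habove
  have ht_bdd : BddAbove (range t) := ⟨b, by
    rintro _ ⟨n, rfl⟩
    obtain ⟨x, hx⟩ := hne n
    exact (ht_le hx).trans (hb (mem_image_of_mem J (hK (Nat.zero_le n) hx)))⟩
  set T := ⨆ n, t n
  have ht_lim : Tendsto t atTop (𝓝 T) := tendsto_atTop_ciSup ht_mono ht_bdd
  have hG n : ∃ x ∈ K n, J x < t n + 1 / (n + 1) := by
    obtain ⟨_, ⟨x, hx, rfl⟩, hlt⟩ := exists_lt_of_csInf_lt ((hne n).image J)
      (lt_add_of_pos_right (t n) Nat.one_div_pos_of_nat)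
    exact ⟨x, hx, hlt⟩
  choose G hGK hGJ using hG
  refine ⟨G, hGK, fun δ hδ => ?_⟩
  filter_upwards [(tendsto_order.mp ht_lim).1 _ (by linarith : T - δ / 4 < T),
    (tendsto_order.mp tendsto_one_div_add_atTop_nhds_zero_nat).2 _ (by linarith : (0 : ℝ) < δ / 4)]
    with N htN hN n hn m hm
  have hmid : t N ≤ J (midpoint ℝ (G n) (G m)) :=
    ht_le ((hconv N).midpoint_mem (hK hn (hGK n)) (hK hm (hGK m)))
  have hGT {k} (hk : N ≤ k) : J (G k) < T + δ / 4 := calc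
    J (G k) < t k + 1 / (k + 1) := hGJ k
    _ ≤ T + 1 / (N + 1) := add_le_add (le_ciSup ht_bdd k) (Nat.one_div_le_one_div hk)
    _ < T + δ / 4 := by linarith
  unfold midpointDefect
  linarith [hGT hn, hGT hm]

theorem exists_seq_mem_midpointDefect_lt {ε : ℕ → ℝ} (hε : ∀ N, 0 < ε N) :
    ∃ G : ℕ → E, (∀ n, G n ∈ K n) ∧
      ∀ N n m, N ≤ n → N ≤ m → midpointDefect J (G n) (G m) < ε N := by
  obtain ⟨G, hGK, hG⟩ := exists_seq_mem_eventually_midpointDefect_lt hK hconv hne hbelow habove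
  obtain ⟨φ, hφ, hφG⟩ := extraction_forall_of_eventually fun N => hG (ε N) (hε N)
  exact ⟨G ∘ φ, fun n => hK (hφ.id_le n) (hGK (φ n)),
    fun N n m hn hm => hφG N (φ n) (hφ.monotone hn) (φ m) (hφ.monotone hm)⟩

end MidpointDefect

theorem eLpNorm_two_lt_ofReal {α : Type*} [MeasurableSpace α] {μ : Measure α} {f : α → ℝ}
    (hf : MemLp f 2 μ) {δ : ℝ} (hδ : 0 < δ) (h : ∫ a, f a ^ 2 ∂μ < δ ^ 2) :
    eLpNorm f 2 μ < ENNReal.ofReal δ := by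
  rw [hf.eLpNorm_eq_integral_rpow_norm two_ne_zero ENNReal.ofNat_ne_top,
    ENNReal.ofReal_lt_ofReal_iff hδ]
  simp only [ENNReal.toReal_ofNat, Real.norm_eq_abs, Real.rpow_two, sq_abs]
  rwa [Real.rpow_inv_lt_iff_of_pos (integral_nonneg fun a => sq_nonneg (f a)) hδ.le two_pos,
    Real.rpow_two]

section ExpNeg

open Real

theorem sq_exp_neg_sub_exp_neg (a b : ℝ) :
    (exp (-a) - exp (-b)) ^ 2
      = exp (-(2 * a)) + exp (-(2 * b)) - 2 * exp (-(2 * midpoint ℝ a b)) := by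
  have hmid : 2 * midpoint ℝ a b = a + b := by
    rw [midpoint_eq_smul_add, smul_eq_mul, ← mul_assoc, mul_invOf_self', one_mul]
  rw [hmid, neg_add, exp_add, two_mul, neg_add, exp_add, two_mul, neg_add, exp_add]
  ring

theorem tendsto_ofReal_of_tendsto_exp_neg {α : Type*} {l : Filter α} {x : α → ℝ} {c : ℝ}
    (h : Tendsto (fun a => exp (-x a)) l (𝓝 c)) :
    ∃ L, Tendsto (fun a => ENNReal.ofReal (x a)) l (𝓝 L) := by
  set F : ℝ≥0∞ → ℝ≥0∞ := fun y => (-ENNReal.log y).toENNReal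
  have hF : Continuous F := EReal.continuous_toENNReal.comp (by fun_prop)
  have hxF a : ENNReal.ofReal (x a) = F (ENNReal.ofReal (exp (-x a))) := by
    simp [F, ← EReal.exp_coe]
  simp_rw [hxF]
  exact ⟨_, (hF.tendsto _).comp ((ENNReal.continuous_ofReal.tendsto c).comp h)⟩

variable {Ω : Type*} [MeasurableSpace Ω] {μ : Measure Ω} {h h₁ h₂ : Ω → ℝ}

theorem integral_exp_neg_le_one [IsProbabilityMeasure μ] (hh : 0 ≤ h) :
    ∫ ω, exp (-h ω) ∂μ ≤ 1 := by
  have hbound : ∀ᵐ ω ∂μ, ‖exp (-h ω)‖ ≤ 1 := ae_of_all _ fun ω => by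
    simpa [abs_of_pos (exp_pos _)] using hh ω
  simpa using (le_abs_self _).trans (norm_integral_le_of_norm_le_const hbound)

variable [IsFiniteMeasure μ]

theorem memLp_exp_neg (hm : Measurable h) (hh : 0 ≤ h) (p : ℝ≥0∞) :
    MemLp (fun ω => exp (-h ω)) p μ :=
  .of_bound (by fun_prop) 1 <| ae_of_all _ fun ω => by
    simpa [abs_of_pos (exp_pos _)] using hh ω

theorem integrable_exp_neg (hm : Measurable h) (hh : 0 ≤ h) :
    Integrable (fun ω => exp (-h ω)) μ :=
  memLp_one_iff_integrable.mp (memLp_exp_neg hm hh 1)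

theorem integral_sq_exp_neg_sub_exp_neg (hm₁ : Measurable h₁) (hm₂ : Measurable h₂)
    (hh₁ : 0 ≤ h₁) (hh₂ : 0 ≤ h₂) :
    ∫ ω, (exp (-h₁ ω) - exp (-h₂ ω)) ^ 2 ∂μ
      = midpointDefect (fun h : Ω → ℝ => ∫ ω, exp (-(2 * h ω)) ∂μ) h₁ h₂ := by
  have hint {h : Ω → ℝ} (hm : Measurable h) (hh : 0 ≤ h) :
      Integrable (fun ω => exp (-(2 * h ω))) μ :=
    integrable_exp_neg (by fun_prop) fun ω => mul_nonneg zero_le_two (hh ω)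
  have hmid_meas : Measurable (midpoint ℝ h₁ h₂) := by
    rw [midpoint_eq_smul_add]; fun_prop
  have hmid_nonneg : 0 ≤ midpoint ℝ h₁ h₂ := by
    rw [midpoint_eq_smul_add]; exact smul_nonneg (by norm_num) (add_nonneg hh₁ hh₂)
  have hint₁₂ : Integrable (fun ω => exp (-(2 * h₁ ω)) + exp (-(2 * h₂ ω))) μ :=
    (hint hm₁ hh₁).add (hint hm₂ hh₂)
  rw [midpointDefect, ← integral_add (hint hm₁ hh₁) (hint hm₂ hh₂), ← integral_const_mul,
    ← integral_sub hint₁₂ ((hint hmid_meas hmid_nonneg).const_mul 2)]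
  congr with ω
  rw [sq_exp_neg_sub_exp_neg, pi_midpoint_apply]

theorem ae_exists_tendsto_exp_neg_of_midpointDefect_lt {G : ℕ → Ω → ℝ}
    (hGm : ∀ n, Measurable (G n)) (hG₀ : ∀ n, 0 ≤ G n)
    (hG : ∀ N n m, N ≤ n → N ≤ m → midpointDefect (fun h : Ω → ℝ => ∫ ω, exp (-(2 * h ω)) ∂μ)
      (G n) (G m) < ((1 / 2) ^ N) ^ 2) :
    ∀ᵐ ω ∂μ, ∃ c, Tendsto (fun n => exp (-G n ω)) atTop (𝓝 c) := by
  have hmemLp n : MemLp (fun ω => exp (-G n ω)) 2 μ := memLp_exp_neg (hGm n) (hG₀ n) 2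
  have hB : ∑' N, ENNReal.ofReal ((1 / 2) ^ N) ≠ ∞ := by
    rw [← ENNReal.ofReal_tsum_of_nonneg (fun N => by positivity) summable_geometric_two]
    exact ENNReal.ofReal_ne_top
  refine Lp.ae_tendsto_of_cauchy_eLpNorm (fun n => (hmemLp n).aestronglyMeasurable) one_le_two hB
    fun N n m hn hm => eLpNorm_two_lt_ofReal ((hmemLp n).sub (hmemLp m)) (by positivity) ?_
  exact (integral_sq_exp_neg_sub_exp_neg (hGm n) (hGm m) (hG₀ n) (hG₀ m)).trans_lt
    (hG N n m hn hm)

end ExpNeg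

/-- Delbaen–Schachermayer: for a sequence of nonnegative measurable functions,
there are forward convex combinations converging almost surely (to a possibly
infinite-valued limit). -/
theorem forward_convex_combinations_converge_ae
    {Ω : Type*} [MeasurableSpace Ω] (P : Measure Ω) [IsProbabilityMeasure P]
    (f : ℕ → Ω → ℝ) (hfmeas : ∀ n, Measurable (f n)) (hfnonneg : ∀ n ω, 0 ≤ f n ω) :
    ∃ (g : ℕ → Ω → ℝ) (glim : Ω → ℝ≥0∞),
      Measurable glim ∧
      -- each `g n` is a finite convex combination of the `f m`, `m ≥ n`
      (∀ n : ℕ, ∃ (k : ℕ) (m : Fin (k + 1) → ℕ) (lam : Fin (k + 1) → ℝ),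
        (∀ i, n ≤ m i) ∧ (∀ i, 0 ≤ lam i) ∧ (∑ i, lam i = 1) ∧
        g n = fun ω => ∑ i, lam i * f (m i) ω) ∧
      ∀ᵐ ω ∂P, Tendsto (fun n => ENNReal.ofReal (g n ω)) atTop (nhds (glim ω)) := by
  set K : ℕ → Set (Ω → ℝ) := fun n => convexHull ℝ (f '' Ici n)
  have hKm {n h} (hh : h ∈ K n) : Measurable h :=
    measurable_of_mem_convexHull (by rintro _ ⟨m, -, rfl⟩; exact hfmeas m) hh
  have hK₀ {n h} (hh : h ∈ K n) : 0 ≤ h :=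
    convexHull_min (by rintro _ ⟨m, -, rfl⟩; exact hfnonneg m) (convex_Ici 0) hh
  have hJ₀ : BddBelow ((fun h => ∫ ω, Real.exp (-(2 * h ω)) ∂P) '' K 0) :=
    ⟨0, by rintro _ ⟨h, -, rfl⟩; exact integral_nonneg fun ω => (Real.exp_pos _).le⟩
  have hJ₁ : BddAbove ((fun h => ∫ ω, Real.exp (-(2 * h ω)) ∂P) '' K 0) := ⟨1, by
    rintro _ ⟨h, hh, rfl⟩
    exact integral_exp_neg_le_one fun ω => mul_nonneg zero_le_two (hK₀ hh ω)⟩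
  obtain ⟨G, hGK, hG⟩ := exists_seq_mem_midpointDefect_lt
    (fun n m hnm => convexHull_mono (image_mono (Ici_subset_Ici.mpr hnm)))
    (fun n => convex_convexHull ℝ _)
    (fun n => ⟨f n, subset_convexHull ℝ _ (mem_image_of_mem f self_mem_Ici)⟩) hJ₀ hJ₁
    (ε := fun N => ((1 / 2) ^ N) ^ 2) (fun N => by positivity)
  have hconv := ae_exists_tendsto_exp_neg_of_midpointDefect_lt (fun n => hKm (hGK n))
    (fun n => hK₀ (hGK n)) hG
  refine ⟨G, fun ω => limsup (fun n => ENNReal.ofReal (G n ω)) atTop,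
    .limsup fun n => ENNReal.measurable_ofReal.comp (hKm (hGK n)), fun n => ?_, ?_⟩
  · obtain ⟨k, m, w, hm, hw, hsum, hGn⟩ := exists_fin_of_mem_convexHull_image (hGK n)
    exact ⟨k, m, w, hm, hw, hsum, by ext; simp [hGn]⟩
  · filter_upwards [hconv] with ω ⟨c, hc⟩
    obtain ⟨L, hL⟩ := tendsto_ofReal_of_tendsto_exp_neg hc
    rwa [hL.limsup_eq]
end

section
/- Let (T_i)_{i≥1} be a sequence of independent nonnegative random variables on a probability space (Ω, F, P) such that T_i is exponentially distributed with mean i², i.e., P(T_i > t) = exp(−t/i²) for all t ≥ 0, and let M^i_t = (t ∧ T_i)/i² − 1_{{T_i ≤ t}}. Then P-almost surely, for every T > 0, the averages (1/n) ∑_{i=1}^n i² M^i_t converge to t uniformly in t ∈ [0, T] as n → ∞; that is, almost surely sup_{0 ≤ t ≤ T} | (1/n) ∑_{i=1}^n (t ∧ T_i − i²·1_{{T_i ≤ t}}) − t | → 0. -/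
open MeasureTheory Filter
open scoped ENNReal

/-!
By the first Borel–Cantelli lemma, `P(T_i ≤ k) ≤ k / i²` is summable in `i` for every `k`, so
almost surely `T_i → ∞`. Fix such an `ω` and `Tmax`: all but finitely many summands equal `t`
on `[0, Tmax]`, and each of the finitely many others differs from `t` by a bounded amount, so
the averages differ from `t` by `O(1/n)` uniformly on `[0, Tmax]`.
-/

theorem measure_le_le_ofReal_div_of_measure_lt_eq_exp {Ω : Type*} [MeasurableSpace Ω]
    {μ : Measure Ω} [IsProbabilityMeasure μ] {X : Ω → ℝ} (hX : Measurable X) {t a : ℝ}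
    (h : μ {ω | t < X ω} = ENNReal.ofReal (Real.exp (-t / a))) :
    μ {ω | X ω ≤ t} ≤ ENNReal.ofReal (t / a) := by
  have hcompl : {ω | X ω ≤ t} = {ω | t < X ω}ᶜ := by
    ext ω
    simp
  rw [hcompl, prob_compl_eq_one_sub (measurableSet_lt measurable_const hX), h, tsub_le_iff_right]
  have hexp : 1 ≤ t / a + Real.exp (-t / a) := by
    rw [neg_div]
    linarith [Real.add_one_le_exp (-(t / a))]
  calc (1 : ℝ≥0∞) = ENNReal.ofReal 1 := ENNReal.ofReal_one.symm
    _ ≤ ENNReal.ofReal (t / a + Real.exp (-t / a)) := ENNReal.ofReal_le_ofReal hexp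
    _ ≤ ENNReal.ofReal (t / a) + ENNReal.ofReal (Real.exp (-t / a)) := ENNReal.ofReal_add_le

theorem ae_tendsto_atTop_of_tsum_measure_le_ne_top {Ω : Type*} [MeasurableSpace Ω]
    {μ : Measure Ω} {X : ℕ → Ω → ℝ} (h : ∀ k : ℕ, ∑' i, μ {ω | X i ω ≤ k} ≠ ∞) :
    ∀ᵐ ω ∂μ, Tendsto (fun i => X i ω) atTop atTop := by
  filter_upwards [ae_all_iff.2 fun k => ae_eventually_notMem (h k)] with ω hω
  refine tendsto_atTop.2 fun b => (hω ⌈b⌉₊).mono fun i hi => ?_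
  rw [not_le] at hi
  exact (Nat.le_ceil b).trans hi.le

theorem summable_div_succ_sq (c : ℝ) : Summable fun i : ℕ => c / ((i + 1 : ℕ) : ℝ) ^ 2 := by
  have h := ((summable_nat_add_iff 1).2 (Real.summable_one_div_nat_pow.2 one_lt_two)).mul_left c
  simpa only [mul_one_div] using h

theorem tendstoUniformlyOn_cesaro_of_eventually_eqOn {α : Type*} {f : ℕ → α → ℝ} {g : α → ℝ}
    {s : Set α} (hbdd : ∀ i, ∃ C, ∀ t ∈ s, |f i t - g t| ≤ C)
    (heq : ∀ᶠ i in atTop, Set.EqOn (f i) g s) :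
    TendstoUniformlyOn (fun (n : ℕ) t => (1 / (n : ℝ)) * ∑ i ∈ Finset.Icc 1 n, f i t)
      g atTop s := by
  obtain ⟨N, hN⟩ := eventually_atTop.1 heq
  choose C hC using hbdd
  set B := ∑ i ∈ Finset.Icc 1 N, C i
  have herr : ∀ n ≥ N, ∀ t ∈ s, |∑ i ∈ Finset.Icc 1 n, (f i t - g t)| ≤ B := by
    intro n hn t ht
    rw [← Finset.sum_subset (Finset.Icc_subset_Icc_right hn) fun i hi hiN => ?_]
    · exact (Finset.abs_sum_le_sum_abs _ _).trans (Finset.sum_le_sum fun i _ => hC i t ht)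
    · have hNi : N ≤ i := by
        simp only [Finset.mem_Icc, not_and, not_le] at hi hiN
        exact (hiN hi.1).le
      rw [hN i hNi ht, sub_self]
  rw [Metric.tendstoUniformlyOn_iff]
  intro ε hε
  filter_upwards [eventually_ge_atTop (max N 1),
    (tendsto_const_div_atTop_nhds_zero_nat B).eventually (gt_mem_nhds hε)] with n hn hBn t ht
  have hn0 : (0 : ℝ) < n := by exact_mod_cast (le_of_max_le_right hn : 1 ≤ n)
  have hdiff : g t - 1 / (n : ℝ) * ∑ i ∈ Finset.Icc 1 n, f i t =
      -(∑ i ∈ Finset.Icc 1 n, (f i t - g t)) / n := by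
    rw [Finset.sum_sub_distrib, Finset.sum_const, Nat.card_Icc, add_tsub_cancel_right,
      nsmul_eq_mul]
    field_simp
    ring
  rw [Real.dist_eq, hdiff, abs_div, abs_neg, abs_of_pos hn0]
  exact (div_le_div_of_nonneg_right (herr n (le_of_max_le_left hn) t ht) hn0.le).trans_lt hBn

theorem abs_min_sub_mul_ite_sub_le {t x c : ℝ} (ht : 0 ≤ t) (hc : 0 ≤ c) :
    |min t x - c * (if x ≤ t then 1 else 0) - t| ≤ |x| + t + c := by
  have := neg_abs_le x
  have := le_abs_self x
  rw [abs_le]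
  split_ifs with hle
  · rw [min_eq_right hle]
    constructor <;> linarith
  · rw [min_eq_left (not_le.1 hle).le]
    constructor <;> linarith

theorem averages_converge_uniformly_to_identity_general
    {Ω : Type*} [MeasurableSpace Ω] (P : Measure Ω) [IsProbabilityMeasure P]
    (T : ℕ → Ω → ℝ) (hTmeas : ∀ i, Measurable (T i))
    (hTexp : ∀ i, 1 ≤ i → ∀ t : ℝ, 0 ≤ t →
      P {ω | t < T i ω} = ENNReal.ofReal (Real.exp (-t / (i : ℝ) ^ 2))) :
    ∀ᵐ ω ∂P, ∀ Tmax : ℝ, 0 < Tmax →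
      TendstoUniformlyOn
        (fun (n : ℕ) (t : ℝ) => (1 / (n : ℝ)) * ∑ i ∈ Finset.Icc 1 n,
          (min t (T i ω) - (i : ℝ) ^ 2 * if T i ω ≤ t then 1 else 0))
        (fun t => t) atTop (Set.Icc 0 Tmax) := by
  have htail : ∀ᵐ ω ∂P, Tendsto (fun i => T (i + 1) ω) atTop atTop :=
    ae_tendsto_atTop_of_tsum_measure_le_ne_top fun k =>
      ne_top_of_le_ne_top (summable_div_succ_sq k).tsum_ofReal_ne_top <|
        ENNReal.tsum_le_tsum fun i => measure_le_le_ofReal_div_of_measure_lt_eq_exp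
          (hTmeas (i + 1)) (hTexp (i + 1) (Nat.le_add_left 1 i) k k.cast_nonneg)
  filter_upwards [htail] with ω hω Tmax _
  refine tendstoUniformlyOn_cesaro_of_eventually_eqOn
    (fun i => ⟨|T i ω| + Tmax + (i : ℝ) ^ 2, fun t ht => ?_⟩) ?_
  · exact (abs_min_sub_mul_ite_sub_le ht.1 (sq_nonneg _)).trans (by linarith [ht.2])
  · have hω' := (tendsto_add_atTop_iff_nat (f := fun i => T i ω) 1).1 hω
    filter_upwards [hω'.eventually_gt_atTop Tmax] with i hi t ht
    have hti : t < T i ω := ht.2.trans_lt hi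
    simp [min_eq_left hti.le, not_le.2 hti]

/-- Pathwise convergence in Example 2.1: almost surely, for every `T > 0`,
the averages `(1/n) ∑_{i=1}^n i² M^i_t = (1/n) ∑_{i=1}^n (t ∧ T_i − i² 1_{T_i ≤ t})`
converge to `t` uniformly in `t ∈ [0, T]`. -/
theorem averages_converge_uniformly_to_identity
    {Ω : Type*} [MeasurableSpace Ω] (P : Measure Ω) [IsProbabilityMeasure P]
    (T : ℕ → Ω → ℝ) (hTmeas : ∀ i, Measurable (T i)) (hTnonneg : ∀ i ω, 0 ≤ T i ω)
    (hTindep : ProbabilityTheory.iIndepFun T P)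
    (hTexp : ∀ i, 1 ≤ i → ∀ t : ℝ, 0 ≤ t →
      P {ω | t < T i ω} = ENNReal.ofReal (Real.exp (-t / (i : ℝ) ^ 2))) :
    ∀ᵐ ω ∂P, ∀ Tmax : ℝ, 0 < Tmax →
      TendstoUniformlyOn
        (fun (n : ℕ) (t : ℝ) => (1 / (n : ℝ)) * ∑ i ∈ Finset.Icc 1 n,
          (min t (T i ω) - (i : ℝ) ^ 2 * if T i ω ≤ t then 1 else 0))
        (fun t => t) atTop (Set.Icc 0 Tmax) :=
  averages_converge_uniformly_to_identity_general P T hTmeas hTexp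
end
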